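/- arXiv:1506.04190 — 3 statements merged into one kernel-verified Lean document; each statement's English description precedes it below -/
import Mathlib

section
/- Let m be a positive integer, let ρ be a continuous probability density on ℝ^m that is strictly positive everywhere, and let f : ℝ^m → ℝ be continuously differentiable with ∇f square-integrable with respect to ρ. Let C = ∫ ∇f ∇fᵀ ρ dx and suppose w ∈ ℝ^m satisfies wᵀ C w = 0. Then ∇f(x)ᵀ w = 0 for every x ∈ ℝ^m, and consequently f(x + t w) = f(x) for every x ∈ ℝ^m and every t ∈ ℝ; that is, f is constant along the direction w. -/
/-!
Since `C` is the second-moment matrix of `∇f` under `ρ dx`, the quadratic form `wᵀ C w` equals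
`∫ ⟪∇f, w⟫² ρ dx`. A positive density charges every nonempty open set, so the continuous
function `⟪∇f, w⟫²`, having integral zero, vanishes identically. Then `t ↦ f (x + t • w)` has
zero derivative and is constant.
-/

open MeasureTheory Matrix

section

variable {α : Type*} [MeasurableSpace α] {μ : Measure α}

theorem dotProduct_mulVec_eq_integral_sq {ι : Type*} [Fintype ι] {v : α → ι → ℝ}
    (hv : ∀ i j, Integrable (fun x => v x i * v x j) μ) {C : Matrix ι ι ℝ}
    (hC : ∀ i j, C i j = ∫ x, v x i * v x j ∂μ) (w : ι → ℝ) :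
    w ⬝ᵥ C *ᵥ w = ∫ x, (v x ⬝ᵥ w) ^ 2 ∂μ := by
  have hsq : ∀ x, (v x ⬝ᵥ w) ^ 2 = ∑ i, ∑ j, w i * w j * (v x i * v x j) := fun x => by
    simp only [dotProduct, sq, Finset.sum_mul_sum]
    exact Finset.sum_congr rfl fun i _ => Finset.sum_congr rfl fun j _ => by ring
  simp_rw [hsq]
  rw [integral_finsetSum _ fun i _ => integrable_finsetSum _ fun j _ => (hv i j).const_mul _]
  simp_rw [integral_finsetSum _ fun j _ => (hv _ j).const_mul _, integral_const_mul, ← hC]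
  simp only [dotProduct, mulVec, Finset.mul_sum]
  exact Finset.sum_congr rfl fun i _ => Finset.sum_congr rfl fun j _ => by ring

theorem integrable_apply_mul_apply_of_integrable_norm_sq {ι : Type*} [Fintype ι]
    {u : α → EuclideanSpace ℝ ι} (hu : AEStronglyMeasurable u μ)
    (hu_sq : Integrable (fun x => ‖u x‖ ^ 2) μ) (i j : ι) :
    Integrable (fun x => u x i * u x j) μ := by
  have hmeas : AEStronglyMeasurable (fun x => u x i) μ :=
    (EuclideanSpace.proj i).continuous.comp_aestronglyMeasurable hu
  refine hu_sq.mono (hmeas.mul ((EuclideanSpace.proj j).continuous.comp_aestronglyMeasurable hu))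
    (ae_of_all _ fun x => ?_)
  rw [norm_mul, Real.norm_of_nonneg (sq_nonneg _), sq]
  exact mul_le_mul (PiLp.norm_apply_le _ i) (PiLp.norm_apply_le _ j) (norm_nonneg _)
    (norm_nonneg _)

theorem integrable_inner_sq_of_integrable_norm_sq {E : Type*} [NormedAddCommGroup E]
    [InnerProductSpace ℝ E] {u : α → E} (hu : AEStronglyMeasurable u μ)
    (hu_sq : Integrable (fun x => ‖u x‖ ^ 2) μ) (w : E) :
    Integrable (fun x => inner ℝ (u x) w ^ 2) μ := by
  refine (hu_sq.mul_const (‖w‖ ^ 2)).mono ((hu.inner aestronglyMeasurable_const).pow 2)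
    (ae_of_all _ fun x => ?_)
  rw [Real.norm_of_nonneg (sq_nonneg _), Real.norm_of_nonneg (by positivity), ← mul_pow, ← sq_abs]
  exact pow_le_pow_left₀ (abs_nonneg _) (abs_real_inner_le_norm _ _) 2

end

theorem isOpenPosMeasure_withDensity {α : Type*} [TopologicalSpace α] [MeasurableSpace α]
    {μ : Measure α} [μ.IsOpenPosMeasure] {f : α → ENNReal} (hf : AEMeasurable f μ)
    (hf_pos : ∀ x, f x ≠ 0) : (μ.withDensity f).IsOpenPosMeasure :=
  (withDensity_absolutelyContinuous' hf (ae_of_all _ hf_pos)).isOpenPosMeasure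

theorem Continuous.eq_zero_of_integral_sq_eq_zero {α : Type*} [TopologicalSpace α]
    [MeasurableSpace α] {μ : Measure α} [μ.IsOpenPosMeasure] {g : α → ℝ} (hg : Continuous g)
    (hg_sq : Integrable (fun x => g x ^ 2) μ) (h : ∫ x, g x ^ 2 ∂μ = 0) : g = 0 := by
  have hae := (integral_eq_zero_iff_of_nonneg (fun x => sq_nonneg (g x)) hg_sq).mp h
  have hsq_zero := (Continuous.ae_eq_iff_eq μ (hg.pow 2) continuous_const).mp hae
  funext x
  exact pow_eq_zero_iff two_ne_zero |>.mp (congrFun hsq_zero x)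

theorem apply_add_smul_eq_of_fderiv_apply_eq_zero {E F : Type*} [NormedAddCommGroup E]
    [NormedSpace ℝ E] [NormedAddCommGroup F] [NormedSpace ℝ F] {f : E → F}
    (hf : Differentiable ℝ f) {w : E} (hw : ∀ x, fderiv ℝ f x w = 0) (x : E) (t : ℝ) :
    f (x + t • w) = f x := by
  have hderiv : ∀ s : ℝ, HasDerivAt (fun s => f (x + s • w)) 0 s := fun s => by
    have hline : HasDerivAt (fun s : ℝ => x + s • w) w s := by
      simpa using ((hasDerivAt_id s).smul_const w).const_add x
    have hcomp := (hf _).hasFDerivAt.comp_hasDerivAt s hline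
    rwa [hw] at hcomp
  simpa using is_const_of_deriv_eq_zero (fun s => (hderiv s).differentiableAt)
    (fun s => (hderiv s).deriv) t 0

theorem ContDiff.continuous_gradient {E : Type*} [NormedAddCommGroup E] [InnerProductSpace ℝ E]
    [CompleteSpace E] {f : E → ℝ} (hf : ContDiff ℝ 1 f) : Continuous (gradient f) :=
  (InnerProductSpace.toDual ℝ E).symm.continuous.comp (hf.continuous_fderiv one_ne_zero)

theorem active_subspace_null_direction_constant_general
    (m : ℕ)
    (ρ : EuclideanSpace ℝ (Fin m) → ℝ)
    (hρ_cont : Continuous ρ)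
    (hρ_pos : ∀ x, 0 < ρ x)
    (f : EuclideanSpace ℝ (Fin m) → ℝ)
    (hf : ContDiff ℝ 1 f)
    (hgrad_sq : Integrable (fun x => ‖gradient f x‖ ^ 2)
      (volume.withDensity (fun x => ENNReal.ofReal (ρ x))))
    (C : Matrix (Fin m) (Fin m) ℝ)
    (hC : ∀ i j, C i j = ∫ x, gradient f x i * gradient f x j
      ∂(volume.withDensity (fun x => ENNReal.ofReal (ρ x))))
    (w : EuclideanSpace ℝ (Fin m))
    (h_null : (fun i => w i) ⬝ᵥ C.mulVec (fun i => w i) = 0) :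
    (∀ x, ∑ i, gradient f x i * w i = 0) ∧
    (∀ (x : EuclideanSpace ℝ (Fin m)) (t : ℝ), f (x + t • w) = f x) := by
  set μ := volume.withDensity (fun x => ENNReal.ofReal (ρ x))
  have : μ.IsOpenPosMeasure := isOpenPosMeasure_withDensity
    hρ_cont.measurable.ennreal_ofReal.aemeasurable fun x => (ENNReal.ofReal_pos.mpr (hρ_pos x)).ne'
  have hgrad := hf.continuous_gradient
  have hinner_eq (x : EuclideanSpace ℝ (Fin m)) :
      inner ℝ (gradient f x) w = ∑ i, gradient f x i * w i := by
    rw [real_inner_comm]; rfl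
  have hinner_sq_integral : ∫ x, inner ℝ (gradient f x) w ^ 2 ∂μ = 0 := by
    simp_rw [hinner_eq]
    rw [← h_null, dotProduct_mulVec_eq_integral_sq
      (integrable_apply_mul_apply_of_integrable_norm_sq hgrad.aestronglyMeasurable hgrad_sq) hC]
    rfl
  have hinner_zero : (fun x => inner ℝ (gradient f x) w) = 0 :=
    (hgrad.inner continuous_const).eq_zero_of_integral_sq_eq_zero
      (integrable_inner_sq_of_integrable_norm_sq hgrad.aestronglyMeasurable hgrad_sq w)
      hinner_sq_integral
  refine ⟨fun x => hinner_eq x ▸ congrFun hinner_zero x, ?_⟩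
  refine apply_add_smul_eq_of_fderiv_apply_eq_zero (hf.differentiable one_ne_zero) fun x => ?_
  rw [← inner_gradient_left]
  exact congrFun hinner_zero x

/-- For a continuous, everywhere-positive probability density `ρ` and a
continuously differentiable `f` with square-integrable gradient, if `wᵀ C w = 0` for
`C = ∫ ∇f ∇fᵀ ρ dx`, then `∇f(x)ᵀ w = 0` everywhere and `f` is constant along
direction `w`. -/
theorem active_subspace_null_direction_constant
    (m : ℕ) (hm : 0 < m)
    (ρ : EuclideanSpace ℝ (Fin m) → ℝ)
    (hρ_cont : Continuous ρ)
    (hρ_pos : ∀ x, 0 < ρ x)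
    (hρ_prob : ∫ x, ρ x = 1)
    (f : EuclideanSpace ℝ (Fin m) → ℝ)
    (hf : ContDiff ℝ 1 f)
    (hgrad_sq : Integrable (fun x => ‖gradient f x‖ ^ 2)
      (volume.withDensity (fun x => ENNReal.ofReal (ρ x))))
    (C : Matrix (Fin m) (Fin m) ℝ)
    (hC : ∀ i j, C i j = ∫ x, gradient f x i * gradient f x j
      ∂(volume.withDensity (fun x => ENNReal.ofReal (ρ x))))
    (w : EuclideanSpace ℝ (Fin m))
    (h_null : (fun i => w i) ⬝ᵥ C.mulVec (fun i => w i) = 0) :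
    (∀ x, ∑ i, gradient f x i * w i = 0) ∧
    (∀ (x : EuclideanSpace ℝ (Fin m)) (t : ℝ), f (x + t • w) = f x) :=
  active_subspace_null_direction_constant_general m ρ hρ_cont hρ_pos f hf hgrad_sq C hC w h_null
end

section
/- Let m be a positive integer, let ρ be a continuous probability density on ℝ^m that is strictly positive everywhere, and let f : ℝ^m → ℝ be continuously differentiable with ∇f square-integrable with respect to ρ. Let C = ∫ ∇f ∇fᵀ ρ dx, let n < m, and let W₁ ∈ ℝ^{m×n} and W₂ ∈ ℝ^{m×(m−n)} be such that the concatenated matrix W = [W₁ W₂] is orthogonal and C W₂ = 0. Then f(x) = f(W₁ W₁ᵀ x) for every x ∈ ℝ^m; in particular, there exists g : ℝⁿ → ℝ (namely g(y) = f(W₁ y)) such that f(x) = g(W₁ᵀ x) for all x ∈ ℝ^m. -/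
open MeasureTheory Matrix

/-!
For any vector `v`, `vᵀ C v = ∫ ⟪∇f, v⟫² ρ dx`. A measure with an everywhere-positive continuous
density charges every nonempty open set, so when `C v = 0` the continuous function `⟪∇f, v⟫`
vanishes identically. Hence `f` is constant along every direction in the range of `W₂`, and
orthogonality of `[W₁ W₂]` gives `x - W₁ W₁ᵀ x = W₂ (W₂ᵀ x)`, which lies in that range.
-/

theorem Matrix.mul_transpose_add_mul_transpose_eq_one {R m n₁ n₂ : Type*} [CommRing R]
    [Fintype m] [Fintype n₁] [Fintype n₂] [DecidableEq m] [DecidableEq n₁] [DecidableEq n₂]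
    {W₁ : Matrix m n₁ R} {W₂ : Matrix m n₂ R}
    (hcard : Fintype.card n₁ + Fintype.card n₂ = Fintype.card m)
    (h : (fromCols W₁ W₂)ᵀ * fromCols W₁ W₂ = 1) :
    W₁ * W₁ᵀ + W₂ * W₂ᵀ = 1 := by
  rw [← fromCols_mul_fromRows, ← transpose_fromCols]
  exact (mul_eq_one_comm_of_card_eq _ _ _ (by simpa using hcard)).1 h

theorem MeasureTheory.isOpenPosMeasure_withDensity {X : Type*} [TopologicalSpace X]
    [MeasurableSpace X] {ν : Measure X} [ν.IsOpenPosMeasure] {d : X → ENNReal}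
    (hd : AEMeasurable d ν) (hd0 : ∀ᵐ x ∂ν, d x ≠ 0) : (ν.withDensity d).IsOpenPosMeasure :=
  (withDensity_absolutelyContinuous' hd hd0).isOpenPosMeasure

theorem apply_add_eq_of_fderiv_apply_eq_zero {E F : Type*} [NormedAddCommGroup E]
    [NormedSpace ℝ E] [NormedAddCommGroup F] [NormedSpace ℝ F] {f : E → F} {w : E}
    (hf : Differentiable ℝ f) (hw : ∀ y, fderiv ℝ f y w = 0) (x : E) : f (x + w) = f x := by
  have hline : ∀ t : ℝ, HasDerivAt (fun t : ℝ => f (x + t • w)) 0 t := fun t => by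
    have hpath : HasDerivAt (fun t : ℝ => x + t • w) w t := by
      simpa using ((hasDerivAt_id t).smul_const w).const_add x
    have hcomp := (hf (x + t • w)).hasFDerivAt.comp_hasDerivAt t hpath
    rwa [hw] at hcomp
  simpa using is_const_of_deriv_eq_zero (fun t => (hline t).differentiableAt)
    (fun t => (hline t).deriv) 1 0

section SecondMoment

variable {X ι : Type*} [MeasurableSpace X] [Fintype ι] {μ : Measure X}
  {G : X → EuclideanSpace ℝ ι} {C : Matrix ι ι ℝ}

theorem MeasureTheory.MemLp.integrable_apply_mul_apply (hG : MemLp G 2 μ) (i j : ι) :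
    Integrable (fun x => G x i * G x j) μ :=
  ((EuclideanSpace.proj (𝕜 := ℝ) i).comp_memLp' hG).integrable_mul
    ((EuclideanSpace.proj (𝕜 := ℝ) j).comp_memLp' hG)

theorem MeasureTheory.MemLp.integrable_inner_toLp_sq (hG : MemLp G 2 μ) (v : ι → ℝ) :
    Integrable (fun x => inner ℝ (G x) (WithLp.toLp 2 v) ^ 2) μ := by
  simpa [real_inner_comm] using ((innerSL ℝ (WithLp.toLp 2 v)).comp_memLp' hG).integrable_sq

theorem integral_inner_toLp_sq (hG : MemLp G 2 μ) (hC : ∀ i j, C i j = ∫ x, G x i * G x j ∂μ)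
    (v : ι → ℝ) : ∫ x, inner ℝ (G x) (WithLp.toLp 2 v) ^ 2 ∂μ = v ⬝ᵥ (C *ᵥ v) := by
  have hexpand : ∀ x, inner ℝ (G x) (WithLp.toLp 2 v) ^ 2
      = ∑ i, ∑ j, v i * v j * (G x i * G x j) := fun x => by
    simp only [PiLp.inner_apply, RCLike.inner_apply, conj_trivial, sq, Finset.sum_mul_sum]
    exact Finset.sum_congr rfl fun i _ => Finset.sum_congr rfl fun j _ => by ring
  have hint : ∀ i j, Integrable (fun x => v i * v j * (G x i * G x j)) μ := fun i j =>
    (hG.integrable_apply_mul_apply i j).const_mul _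
  simp_rw [hexpand]
  rw [integral_finsetSum _ fun i _ => integrable_finsetSum _ fun j _ => hint i j]
  simp_rw [integral_finsetSum _ fun j _ => hint _ j, integral_const_mul, ← hC]
  simp only [dotProduct, mulVec, Finset.mul_sum]
  exact Finset.sum_congr rfl fun i _ => Finset.sum_congr rfl fun j _ => by ring

theorem inner_toLp_eq_zero_of_mulVec_eq_zero [TopologicalSpace X] [μ.IsOpenPosMeasure]
    (hGc : Continuous G) (hG : MemLp G 2 μ) (hC : ∀ i j, C i j = ∫ x, G x i * G x j ∂μ)
    {v : ι → ℝ} (hv : C *ᵥ v = 0) (x : X) : inner ℝ (G x) (WithLp.toLp 2 v) = 0 := by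
  by_contra hx
  have hpos := integral_pos_of_integrable_nonneg_nonzero
    (f := fun x => inner ℝ (G x) (WithLp.toLp 2 v) ^ 2) ((hGc.inner continuous_const).pow 2)
    (hG.integrable_inner_toLp_sq v) (fun _ => sq_nonneg _) (pow_ne_zero 2 hx)
  rw [integral_inner_toLp_sq hG hC, hv, dotProduct_zero] at hpos
  exact hpos.false

end SecondMoment

theorem active_subspace_ridge_structure_general
    (m n : ℕ) (hn : n < m)
    (ρ : EuclideanSpace ℝ (Fin m) → ℝ)
    (hρ_cont : Continuous ρ)
    (hρ_pos : ∀ x, 0 < ρ x)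
    (f : EuclideanSpace ℝ (Fin m) → ℝ)
    (hf : ContDiff ℝ 1 f)
    (hgrad_sq : Integrable (fun x => ‖gradient f x‖ ^ 2)
      (volume.withDensity (fun x => ENNReal.ofReal (ρ x))))
    (C : Matrix (Fin m) (Fin m) ℝ)
    (hC : ∀ i j, C i j = ∫ x, gradient f x i * gradient f x j
      ∂(volume.withDensity (fun x => ENNReal.ofReal (ρ x))))
    (W₁ : Matrix (Fin m) (Fin n) ℝ)
    (W₂ : Matrix (Fin m) (Fin (m - n)) ℝ)
    (h_orth : (Matrix.fromCols W₁ W₂)ᵀ * Matrix.fromCols W₁ W₂ = 1)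
    (h_null : C * W₂ = 0) :
    (∀ x : EuclideanSpace ℝ (Fin m),
      f x = f ((EuclideanSpace.equiv (Fin m) ℝ).symm
        ((W₁ * W₁ᵀ).mulVec (fun i => x i)))) ∧
    ∃ g : EuclideanSpace ℝ (Fin n) → ℝ,
      (∀ y : EuclideanSpace ℝ (Fin n),
        g y = f ((EuclideanSpace.equiv (Fin m) ℝ).symm (W₁.mulVec (fun i => y i)))) ∧
      ∀ x : EuclideanSpace ℝ (Fin m),
        f x = g ((EuclideanSpace.equiv (Fin n) ℝ).symm (W₁ᵀ.mulVec (fun i => x i))) := by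
  set μ := volume.withDensity (fun x => ENNReal.ofReal (ρ x))
  have hGc : Continuous (gradient f) :=
    (InnerProductSpace.toDual ℝ _).symm.continuous.comp (hf.continuous_fderiv one_ne_zero)
  have hG : MemLp (gradient f) 2 μ :=
    (memLp_two_iff_integrable_sq_norm hGc.aestronglyMeasurable).2 hgrad_sq
  have : μ.IsOpenPosMeasure := isOpenPosMeasure_withDensity
    hρ_cont.measurable.ennreal_ofReal.aemeasurable (ae_of_all _ fun x => by simpa using hρ_pos x)
  have hflat : ∀ u y, fderiv ℝ f y (WithLp.toLp 2 (W₂ *ᵥ u)) = 0 := fun u y => by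
    rw [← inner_gradient_left]
    exact inner_toLp_eq_zero_of_mulVec_eq_zero hGc hG hC
      (by rw [mulVec_mulVec, h_null, zero_mulVec]) y
  have hproj : W₁ * W₁ᵀ + W₂ * W₂ᵀ = 1 :=
    mul_transpose_add_mul_transpose_eq_one (by simp only [Fintype.card_fin]; omega) h_orth
  have hridge : ∀ x : EuclideanSpace ℝ (Fin m),
      f x = f (WithLp.toLp 2 ((W₁ * W₁ᵀ) *ᵥ x.ofLp)) := fun x => by
    have hx : x = WithLp.toLp 2 ((W₁ * W₁ᵀ) *ᵥ x.ofLp)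
        + WithLp.toLp 2 (W₂ *ᵥ (W₂ᵀ *ᵥ x.ofLp)) := by
      rw [← WithLp.toLp_add, mulVec_mulVec, ← add_mulVec, hproj, one_mulVec]
    conv_lhs => rw [hx]
    exact apply_add_eq_of_fderiv_apply_eq_zero (hf.differentiable one_ne_zero) (hflat _) _
  refine ⟨hridge, _, fun _ => rfl, fun x => ?_⟩
  rw [hridge x, ← mulVec_mulVec]
  rfl

/-- If `W = [W₁ W₂]` is orthogonal and `C W₂ = 0` for
`C = ∫ ∇f ∇fᵀ ρ dx` (with `ρ` a continuous everywhere-positive probability density and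
`f` continuously differentiable with square-integrable gradient), then
`f(x) = f(W₁ W₁ᵀ x)` for all `x`; in particular `f(x) = g(W₁ᵀ x)` with `g(y) = f(W₁ y)`. -/
theorem active_subspace_ridge_structure
    (m n : ℕ) (hm : 0 < m) (hn : n < m)
    (ρ : EuclideanSpace ℝ (Fin m) → ℝ)
    (hρ_cont : Continuous ρ)
    (hρ_pos : ∀ x, 0 < ρ x)
    (hρ_prob : ∫ x, ρ x = 1)
    (f : EuclideanSpace ℝ (Fin m) → ℝ)
    (hf : ContDiff ℝ 1 f)
    (hgrad_sq : Integrable (fun x => ‖gradient f x‖ ^ 2)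
      (volume.withDensity (fun x => ENNReal.ofReal (ρ x))))
    (C : Matrix (Fin m) (Fin m) ℝ)
    (hC : ∀ i j, C i j = ∫ x, gradient f x i * gradient f x j
      ∂(volume.withDensity (fun x => ENNReal.ofReal (ρ x))))
    (W₁ : Matrix (Fin m) (Fin n) ℝ)
    (W₂ : Matrix (Fin m) (Fin (m - n)) ℝ)
    (h_orth : (Matrix.fromCols W₁ W₂)ᵀ * Matrix.fromCols W₁ W₂ = 1)
    (h_null : C * W₂ = 0) :
    (∀ x : EuclideanSpace ℝ (Fin m),
      f x = f ((EuclideanSpace.equiv (Fin m) ℝ).symm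
        ((W₁ * W₁ᵀ).mulVec (fun i => x i)))) ∧
    ∃ g : EuclideanSpace ℝ (Fin n) → ℝ,
      (∀ y : EuclideanSpace ℝ (Fin n),
        g y = f ((EuclideanSpace.equiv (Fin m) ℝ).symm (W₁.mulVec (fun i => y i)))) ∧
      ∀ x : EuclideanSpace ℝ (Fin m),
        f x = g ((EuclideanSpace.equiv (Fin n) ℝ).symm (W₁ᵀ.mulVec (fun i => x i))) :=
  active_subspace_ridge_structure_general m n hn ρ hρ_cont hρ_pos f hf hgrad_sq C hC W₁ W₂ h_orth
    h_null
end

section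
/- Let m be a positive integer, let H ∈ ℝ^{m×m} be symmetric, let f(x) = ½ xᵀ H x, and let ρ be the uniform probability density on [−1,1]^m. Let C = ∫ ∇f ∇fᵀ ρ dx. If v ∈ ℝ^m is an eigenvector of H with eigenvalue μ, then v is an eigenvector of C with eigenvalue μ²/3. In particular, the eigenvectors of C coincide with the eigenvectors of H, and the eigenvalues of C are the eigenvalues of H squared and divided by 3. -/
/-!
The gradient of `f` is `x ↦ H x`, so `C = H Σ Hᵀ` with `Σ` the second-moment matrix of the
uniform distribution on `[-1,1]^m`. Its density factorises over the coordinates, which makes the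
coordinates independent and centred with `∫_{-1}^{1} t² / 2 dt = 1/3`; hence `Σ = I / 3`,
`C = H² / 3`, and `H v = μ v` gives `C v = μ² v / 3`.
-/

open MeasureTheory Matrix Set
open scoped RealInnerProductSpace

section Gradient

theorem hasGradientAt_half_inner_self_apply {E : Type*} [NormedAddCommGroup E]
    [InnerProductSpace ℝ E] [CompleteSpace E] {T : E →L[ℝ] E}
    (hT : (T : E →ₗ[ℝ] E).IsSymmetric) (x : E) :
    HasGradientAt (fun y => (1 / 2 : ℝ) * ⟪y, T y⟫) (T x) x := by
  rw [hasGradientAt_iff_hasFDerivAt]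
  refine (((hasFDerivAt_id x).inner ℝ T.hasFDerivAt).const_mul (1 / 2 : ℝ)).congr_fderiv ?_
  ext h
  have hTxh : ⟪T x, h⟫ = ⟪x, T h⟫ := hT x h
  simp only [InnerProductSpace.toDual_apply_apply, _root_.smul_apply,
    ContinuousLinearMap.comp_apply, fderivInnerCLM_apply, id, ContinuousLinearMap.prod_apply,
    ContinuousLinearMap.id_apply, smul_eq_mul]
  rw [real_inner_comm (T x) h, hTxh]
  ring

theorem hasGradientAt_half_sum_mul_mul {ι : Type*} [Fintype ι] [DecidableEq ι]
    {H : Matrix ι ι ℝ} (hH : Hᵀ = H) (x : EuclideanSpace ℝ ι) :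
    HasGradientAt (fun x : EuclideanSpace ℝ ι => (1 / 2 : ℝ) * ∑ i, ∑ j, x i * (H i j * x j))
      (WithLp.toLp 2 (H *ᵥ x.ofLp)) x := by
  have hsymm : (toEuclideanLin H).IsSymmetric :=
    isSymmetric_toEuclideanLin_iff.2 (by simpa [IsHermitian] using hH)
  have hinner : ∀ y : EuclideanSpace ℝ ι,
      ∑ i, ∑ j, y i * (H i j * y j) = ⟪y, toEuclideanCLM (𝕜 := ℝ) H y⟫ := fun y => by
    simp [PiLp.inner_apply, mulVec, dotProduct, mul_comm, Finset.mul_sum]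
  simp_rw [hinner]
  exact hasGradientAt_half_inner_self_apply hsymm x

end Gradient

section SecondMoments

variable {α ι : Type*} [MeasurableSpace α] [Fintype ι]

theorem integral_mulVec_mul_mulVec {ν : Measure α} {X : α → ι → ℝ} {S : Matrix ι ι ℝ}
    (hX : ∀ k l, Integrable (fun a => X a k * X a l) ν ∧ ∫ a, X a k * X a l ∂ν = S k l)
    (A B : Matrix ι ι ℝ) (i j : ι) :
    ∫ a, (A *ᵥ X a) i * (B *ᵥ X a) j ∂ν = (A * S * Bᵀ) i j := by
  have hexpand : ∀ a, (A *ᵥ X a) i * (B *ᵥ X a) j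
      = ∑ k, ∑ l, A i k * B j l * (X a k * X a l) := fun a => by
    simp only [mulVec, dotProduct, Finset.sum_mul_sum]
    exact Finset.sum_congr rfl fun k _ => Finset.sum_congr rfl fun l _ => by ring
  simp_rw [hexpand]
  rw [integral_finsetSum _ fun k _ => integrable_finsetSum _ fun l _ => (hX k l).1.const_mul _]
  simp_rw [integral_finsetSum _ fun l _ => ((hX _ l).1.const_mul _), integral_const_mul,
    (hX _ _).2, mul_apply, transpose_apply, Finset.sum_mul]
  rw [Finset.sum_comm]
  exact Finset.sum_congr rfl fun k _ => Finset.sum_congr rfl fun l _ => by ring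

theorem integral_withDensity_ofReal {μ : Measure α} {ρ : α → ℝ} (hρm : Measurable ρ)
    (hρ : ∀ a, 0 ≤ ρ a) (g : α → ℝ) :
    ∫ a, g a ∂μ.withDensity (fun a => ENNReal.ofReal (ρ a)) = ∫ a, ρ a * g a ∂μ := by
  rw [integral_withDensity_eq_integral_toReal_smul hρm.ennreal_ofReal
    (ae_of_all _ fun _ => ENNReal.ofReal_lt_top)]
  simp only [ENNReal.toReal_ofReal (hρ _), smul_eq_mul]

theorem integrable_withDensity_ofReal_iff {μ : Measure α} {ρ : α → ℝ} (hρm : Measurable ρ)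
    (hρ : ∀ a, 0 ≤ ρ a) {g : α → ℝ} :
    Integrable g (μ.withDensity fun a => ENNReal.ofReal (ρ a))
      ↔ Integrable (fun a => ρ a * g a) μ := by
  rw [integrable_withDensity_iff_integrable_smul' hρm.ennreal_ofReal
    (ae_of_all _ fun _ => ENNReal.ofReal_lt_top)]
  simp only [ENNReal.toReal_ofReal (hρ _), smul_eq_mul]

end SecondMoments

section UniformCube

variable {ι : Type*} [Fintype ι]

theorem integral_indicator_Icc_neg_one_one_half_mul_pow (n : ℕ) :
    ∫ s, (Icc (-1 : ℝ) 1).indicator (fun s => 1 / 2 * s ^ n) s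
      = (1 - (-1) ^ (n + 1)) / (2 * (n + 1)) := by
  rw [integral_indicator measurableSet_Icc, integral_Icc_eq_integral_Ioc,
    ← intervalIntegral.integral_of_le (by norm_num), intervalIntegral.integral_const_mul,
    integral_pow]
  field_simp
  ring

theorem indicator_cube_const_pow_mul_prod (t : Set ℝ) (c : ℝ) (g : ι → ℝ → ℝ) (y : ι → ℝ) :
    {y : ι → ℝ | ∀ i, y i ∈ t}.indicator (fun _ => c ^ Fintype.card ι) y * ∏ i, g i (y i)
      = ∏ i, t.indicator (fun s => c * g i s) (y i) := by
  by_cases hy : ∀ i, y i ∈ t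
  · rw [indicator_of_mem (s := {y : ι → ℝ | ∀ i, y i ∈ t}) hy, ← Finset.card_univ,
      ← Finset.prod_const, ← Finset.prod_mul_distrib]
    exact Finset.prod_congr rfl fun i _ => (indicator_of_mem (hy i) (fun s => c * g i s)).symm
  · obtain ⟨i, hi⟩ := not_forall.1 hy
    rw [indicator_of_notMem (s := {y : ι → ℝ | ∀ i, y i ∈ t}) hy, zero_mul,
      Finset.prod_eq_zero (Finset.mem_univ i) (indicator_of_notMem hi _)]

variable (ι) in
noncomputable def uniformCubeDensity : EuclideanSpace ℝ ι → ℝ :=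
  {x | ∀ i, x i ∈ Icc (-1 : ℝ) 1}.indicator fun _ => (1 / 2) ^ Fintype.card ι

theorem measurable_uniformCubeDensity : Measurable (uniformCubeDensity ι) :=
  measurable_const.indicator (by measurability)

theorem uniformCubeDensity_nonneg (x : EuclideanSpace ℝ ι) : 0 ≤ uniformCubeDensity ι x :=
  indicator_nonneg (fun _ _ => by positivity) x

theorem integrable_and_integral_uniformCubeDensity_mul_prod_pow (n : ι → ℕ) :
    Integrable (fun x : EuclideanSpace ℝ ι => uniformCubeDensity ι x * ∏ i, x i ^ n i) ∧
      ∫ x : EuclideanSpace ℝ ι, uniformCubeDensity ι x * ∏ i, x i ^ n i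
        = ∏ i, (1 - (-1) ^ (n i + 1)) / (2 * (n i + 1) : ℝ) := by
  set G : (ι → ℝ) → ℝ :=
    fun y => ∏ i, (Icc (-1 : ℝ) 1).indicator (fun s => 1 / 2 * s ^ n i) (y i)
  have hofLp := EuclideanSpace.volume_preserving_symm_measurableEquiv_toLp ι
  have hfactor : (fun x : EuclideanSpace ℝ ι => uniformCubeDensity ι x * ∏ i, x i ^ n i)
      = G ∘ (MeasurableEquiv.toLp 2 (ι → ℝ)).symm :=
    funext fun x => indicator_cube_const_pow_mul_prod _ _ (fun i s => s ^ n i) x.ofLp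
  rw [hfactor, hofLp.integrable_comp_emb (MeasurableEquiv.measurableEmbedding _)]
  refine ⟨Integrable.fintype_prod fun i => ?_, (hofLp.integral_comp' G).trans ?_⟩
  · exact (continuous_const.mul (continuous_pow _)).integrableOn_Icc.integrable_indicator
      measurableSet_Icc
  · rw [integral_fintype_prod_volume_eq_prod]
    exact Finset.prod_congr rfl fun i _ => integral_indicator_Icc_neg_one_one_half_mul_pow (n i)

theorem prod_pow_single_add_single [DecidableEq ι] (y : ι → ℝ) (k l : ι) :
    ∏ i, y i ^ (Pi.single k 1 + Pi.single l 1 : ι → ℕ) i = y k * y l := by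
  have hsingle : ∀ j, ∏ i, y i ^ (Pi.single j 1 : ι → ℕ) i = y j := fun j => by
    rw [Fintype.prod_eq_single j fun i hi => by simp [hi]]
    simp
  simp only [Pi.add_apply, pow_add, Finset.prod_mul_distrib, hsingle]

variable (ι) in
noncomputable def uniformCube : Measure (EuclideanSpace ℝ ι) :=
  volume.withDensity fun x => ENNReal.ofReal (uniformCubeDensity ι x)

theorem integrable_and_integral_coord_mul_coord_uniformCube [DecidableEq ι] (k l : ι) :
    Integrable (fun x : EuclideanSpace ℝ ι => x k * x l) (uniformCube ι) ∧
      ∫ x, x k * x l ∂uniformCube ι = ((1 / 3 : ℝ) • (1 : Matrix ι ι ℝ)) k l := by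
  rw [uniformCube,
    integrable_withDensity_ofReal_iff measurable_uniformCubeDensity uniformCubeDensity_nonneg,
    integral_withDensity_ofReal measurable_uniformCubeDensity uniformCubeDensity_nonneg]
  obtain ⟨hint, hval⟩ := integrable_and_integral_uniformCubeDensity_mul_prod_pow
    (Pi.single k 1 + Pi.single l 1 : ι → ℕ)
  simp only [prod_pow_single_add_single] at hint hval
  refine ⟨hint, hval.trans ?_⟩
  rw [Matrix.smul_apply, one_apply, smul_eq_mul, mul_ite, mul_one, mul_zero]
  split_ifs with hkl
  · subst hkl
    rw [Fintype.prod_eq_single k fun i hi => by simp [hi]]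
    norm_num
  · exact Finset.prod_eq_zero (Finset.mem_univ k) (by simp [hkl])

end UniformCube

theorem active_subspace_quadratic_eigenpairs_general
    (m : ℕ)
    (H : Matrix (Fin m) (Fin m) ℝ) (hH : Hᵀ = H)
    (f : EuclideanSpace ℝ (Fin m) → ℝ)
    (hf : ∀ x, f x = (1 / 2) * ∑ i, ∑ j, x i * (H i j * x j))
    (ρ : EuclideanSpace ℝ (Fin m) → ℝ)
    (hρ : ρ = Set.indicator {x : EuclideanSpace ℝ (Fin m) | ∀ i, x i ∈ Set.Icc (-1 : ℝ) 1}
      (fun _ => (1 / 2 : ℝ) ^ m))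
    (C : Matrix (Fin m) (Fin m) ℝ)
    (hC : ∀ i j, C i j = ∫ x, gradient f x i * gradient f x j
      ∂(volume.withDensity (fun x => ENNReal.ofReal (ρ x))))
    (v : Fin m → ℝ) (μ : ℝ)
    (h_eig : H.mulVec v = μ • v) :
    C.mulVec v = (μ ^ 2 / 3) • v := by
  have hρ_cube : ρ = uniformCubeDensity (Fin m) := by
    rw [hρ, uniformCubeDensity, Fintype.card_fin]
  have hgrad : ∀ x, gradient f x = WithLp.toLp 2 (H *ᵥ x.ofLp) := fun x => by
    rw [show f = _ from funext hf]
    exact (hasGradientAt_half_sum_mul_mul hH x).gradient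
  have hC_cov : C = H * ((1 / 3 : ℝ) • 1) * Hᵀ := by
    ext i j
    rw [hC, hρ_cube]
    simp only [hgrad, PiLp.toLp_apply]
    exact integral_mulVec_mul_mulVec integrable_and_integral_coord_mul_coord_uniformCube H H i j
  rw [hC_cov, hH, Matrix.mul_smul, Matrix.mul_one, Matrix.smul_mul, smul_mulVec,
    ← mulVec_mulVec, h_eig, mulVec_smul, h_eig, smul_smul, smul_smul]
  congr 1
  ring

/-- For the quadratic `f(x) = ½ xᵀ H x` with `H` symmetric and `ρ` the
uniform probability density on `[-1,1]^m`, if `v` is an eigenvector of `H` with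
eigenvalue `μ`, then `v` is an eigenvector of `C = ∫ ∇f ∇fᵀ ρ dx` with eigenvalue
`μ²/3`. -/
theorem active_subspace_quadratic_eigenpairs
    (m : ℕ) (hm : 0 < m)
    (H : Matrix (Fin m) (Fin m) ℝ) (hH : Hᵀ = H)
    (f : EuclideanSpace ℝ (Fin m) → ℝ)
    (hf : ∀ x, f x = (1 / 2) * ∑ i, ∑ j, x i * (H i j * x j))
    (ρ : EuclideanSpace ℝ (Fin m) → ℝ)
    (hρ : ρ = Set.indicator {x : EuclideanSpace ℝ (Fin m) | ∀ i, x i ∈ Set.Icc (-1 : ℝ) 1}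
      (fun _ => (1 / 2 : ℝ) ^ m))
    (C : Matrix (Fin m) (Fin m) ℝ)
    (hC : ∀ i j, C i j = ∫ x, gradient f x i * gradient f x j
      ∂(volume.withDensity (fun x => ENNReal.ofReal (ρ x))))
    (v : Fin m → ℝ) (μ : ℝ)
    (hv : v ≠ 0)
    (h_eig : H.mulVec v = μ • v) :
    C.mulVec v = (μ ^ 2 / 3) • v :=
  active_subspace_quadratic_eigenpairs_general m H hH f hf ρ hρ C hC v μ h_eig
end
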